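/- Let N ≥ 1 and λ_1,…,λ_N ∈ ℝ with 0 < λ_l < 1/2 for every l. In the polynomial ring ℂ[z_1,…,z_N,ζ_1,…,ζ_N] set q_l = z_l·ζ_l + λ_l·(z_l² + ζ_l²) and T_l = ∂²/∂z_l∂ζ_l + λ_l·(∂²/∂z_l² + ∂²/∂ζ_l²) for l = 1,…,N. Then for every integer p ≥ 2 and every homogeneous polynomial P of degree p there exist homogeneous polynomials A_1,…,A_N of degree p−2 and a homogeneous polynomial P₀ of degree p such that P = Σ_{l=1}^N A_l·q_l + P₀ and T_l(P₀) = 0 for every l = 1,…,N. -/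

import Mathlib

/-!
For the Fischer pairing `⟨P, Q⟩ = ∑ₘ m! Pₘ Qₘ` multiplication by `X i` is adjoint to `∂/∂X i`, so
multiplication by `q_l` is adjoint to `T_l`; and `⟨conj P, P⟩ = ∑ₘ m! |Pₘ|²` vanishes only for
`P = 0`. The space `W` of all `∑ A_l q_l` with `A_l` homogeneous of degree `p - 2` is
finite-dimensional and, because the `q_l` have real coefficients, stable under conjugation, so the
pairing is nondegenerate on `W` and `P = w + P₀` with `w ∈ W` and `P₀ ⊥ W`. Testing
`P₀ ⊥ conj (T_l P₀) · q_l` gives `⟨conj (T_l P₀), T_l P₀⟩ = 0`, i.e. `T_l P₀ = 0`.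
-/

noncomputable section

open MvPolynomial

/-- The quadric `q_l = z_l·ζ_l + λ_l·(z_l² + ζ_l²)` in `ℂ[z_1,…,z_N,ζ_1,…,ζ_N]`,
where `z_l = X (Sum.inl l)` and `ζ_l = X (Sum.inr l)`. -/
def qPoly (N : ℕ) (lam : Fin N → ℝ) (l : Fin N) : MvPolynomial (Fin N ⊕ Fin N) ℂ :=
  X (Sum.inl l) * X (Sum.inr l) + C ((lam l : ℂ)) * (X (Sum.inl l) ^ 2 + X (Sum.inr l) ^ 2)

/-- The Fischer differential operator
`T_l = ∂²/∂z_l∂ζ_l + λ_l·(∂²/∂z_l² + ∂²/∂ζ_l²)` associated to `q_l`. -/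
def fischerOp (N : ℕ) (lam : Fin N → ℝ) (l : Fin N)
    (P : MvPolynomial (Fin N ⊕ Fin N) ℂ) : MvPolynomial (Fin N ⊕ Fin N) ℂ :=
  pderiv (Sum.inl l) (pderiv (Sum.inr l) P) +
    C ((lam l : ℂ)) * (pderiv (Sum.inl l) (pderiv (Sum.inl l) P) +
      pderiv (Sum.inr l) (pderiv (Sum.inr l) P))

theorem LinearMap.BilinForm.exists_sub_mem_orthogonal_of_restrict_nondegenerate
    {K V : Type*} [Field K] [AddCommGroup V] [Module K V] {B : LinearMap.BilinForm K V}
    {W : Submodule K V} [FiniteDimensional K W] (hW : (B.restrict W).Nondegenerate) (x : V) :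
    ∃ w ∈ W, x - w ∈ B.orthogonal W := by
  let e := (B.restrict W).flip.toDual hW.flip
  let φ : Module.Dual K W := (B.flip x).domRestrict W
  refine ⟨e.symm φ, (e.symm φ).2, mem_orthogonal_iff.2 fun n hn => ?_⟩
  have : B n (e.symm φ) = B n x := LinearMap.congr_fun (e.apply_symm_apply φ) ⟨n, hn⟩
  rw [map_sub, this, sub_self]

namespace MvPolynomial

open Nat

variable {σ R : Type*}

def monomialFactorial (m : σ →₀ ℕ) : ℕ := m.prod fun _ k => k !

theorem monomialFactorial_pos (m : σ →₀ ℕ) : 0 < monomialFactorial m :=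
  Finset.prod_pos fun _ _ => factorial_pos _

theorem monomialFactorial_add_single (m : σ →₀ ℕ) (i : σ) :
    monomialFactorial (m + Finsupp.single i 1) = (m i + 1) * monomialFactorial m := by
  classical
  have erase_eq : (m + Finsupp.single i 1).erase i = m.erase i := by
    rw [Finsupp.erase_add, Finsupp.erase_single, add_zero]
  rw [monomialFactorial, monomialFactorial, ← Finsupp.mul_prod_erase' _ i _ fun _ => rfl,
    ← Finsupp.mul_prod_erase' m i _ fun _ => rfl, erase_eq, Finsupp.add_apply,
    Finsupp.single_eq_same, factorial_succ, mul_assoc]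

section CommSemiring

variable [CommSemiring R]

theorem sum_support_coeff_mul_of_subset {P : MvPolynomial σ R} {s : Finset (σ →₀ ℕ)}
    (hs : P.support ⊆ s) (f : (σ →₀ ℕ) → R) :
    ∑ m ∈ P.support, coeff m P * f m = ∑ m ∈ s, coeff m P * f m :=
  Finset.sum_subset hs fun m _ hm => by rw [notMem_support_iff.1 hm, zero_mul]

def fischerPairing : LinearMap.BilinForm R (MvPolynomial σ R) :=
  LinearMap.mk₂ R (fun P Q => ∑ m ∈ P.support, coeff m P * (monomialFactorial m * coeff m Q))
    (fun P P' Q => by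
      classical
      rw [sum_support_coeff_mul_of_subset (P := P + P') support_add,
        sum_support_coeff_mul_of_subset (P := P) Finset.subset_union_left,
        sum_support_coeff_mul_of_subset (P := P') Finset.subset_union_right,
        ← Finset.sum_add_distrib]
      simp only [coeff_add, add_mul])
    (fun c P Q => by
      rw [sum_support_coeff_mul_of_subset (P := c • P) support_smul, Finset.smul_sum]
      simp only [coeff_smul, smul_eq_mul, mul_assoc])
    (fun P Q Q' => by simp only [coeff_add, mul_add, Finset.sum_add_distrib])
    (fun c P Q => by
      simp only [coeff_smul, smul_eq_mul, Finset.mul_sum]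
      exact Finset.sum_congr rfl fun _ _ => by ring)

theorem fischerPairing_eq_sum {P : MvPolynomial σ R} {s : Finset (σ →₀ ℕ)} (hs : P.support ⊆ s)
    (Q : MvPolynomial σ R) :
    fischerPairing P Q = ∑ m ∈ s, coeff m P * (monomialFactorial m * coeff m Q) :=
  sum_support_coeff_mul_of_subset hs _

theorem fischerPairing_monomial (m : σ →₀ ℕ) (a : R) (Q : MvPolynomial σ R) :
    fischerPairing (monomial m a) Q = a * (monomialFactorial m * coeff m Q) := by
  classical
  rw [fischerPairing_eq_sum (support_monomial_subset (a := a)), Finset.sum_singleton,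
    coeff_monomial, if_pos rfl]

theorem fischerPairing_comm (P Q : MvPolynomial σ R) :
    fischerPairing P Q = fischerPairing Q P := by
  classical
  rw [fischerPairing_eq_sum Finset.subset_union_left,
    fischerPairing_eq_sum (s := P.support ∪ Q.support) Finset.subset_union_right]
  exact Finset.sum_congr rfl fun _ _ => by ring

theorem fischerPairing_X_mul (i : σ) (P Q : MvPolynomial σ R) :
    fischerPairing (X i * P) Q = fischerPairing P (pderiv i Q) := by
  induction P using MvPolynomial.induction_on' with
  | monomial m a =>
    rw [X, monomial_mul, one_mul, fischerPairing_monomial, fischerPairing_monomial, coeff_pderiv,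
      add_comm, monomialFactorial_add_single]
    push_cast
    ring
  | add P P' hP hP' => simp only [mul_add, map_add, LinearMap.add_apply, hP, hP']

end CommSemiring

variable {𝕜 ι : Type*} [RCLike 𝕜]

theorem eq_zero_of_fischerPairing_map_conj_self {P : MvPolynomial σ 𝕜}
    (h : fischerPairing (map (starRingEnd 𝕜) P) P = 0) : P = 0 := by
  by_contra hP
  have hpos : 0 < ∑ m ∈ P.support, (monomialFactorial m * ‖coeff m P‖ ^ 2 : ℝ) :=
    Finset.sum_pos (fun m hm => by
      have := monomialFactorial_pos m
      have := norm_pos_iff.2 (mem_support_iff.1 hm)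
      positivity) (support_nonempty.2 hP)
  rw [fischerPairing_eq_sum (support_map_subset _ P)] at h
  refine hpos.ne' (RCLike.ofReal_injective (K := 𝕜) ?_)
  rw [RCLike.ofReal_zero, ← h, RCLike.ofReal_sum]
  refine Finset.sum_congr rfl fun m _ => ?_
  rw [coeff_map]
  push_cast
  rw [← RCLike.conj_mul]
  ring

theorem fischerPairing_restrict_nondegenerate {W : Submodule 𝕜 (MvPolynomial σ 𝕜)}
    (hW : ∀ P ∈ W, map (starRingEnd 𝕜) P ∈ W) :
    (fischerPairing.restrict W).Nondegenerate := by
  have separating : ∀ P : W, (∀ Q : W, fischerPairing (Q : MvPolynomial σ 𝕜) P = 0) → P = 0 :=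
    fun P hP => Subtype.ext <| eq_zero_of_fischerPairing_map_conj_self (hP ⟨_, hW P P.2⟩)
  refine ⟨fun P hP => separating P fun Q => ?_, fun P hP => separating P hP⟩
  rw [fischerPairing_comm]
  exact hP Q

theorem exists_fischer_decomposition [Finite σ] [Fintype ι] {d p : ℕ} (hdp : d ≤ p)
    (q : ι → MvPolynomial σ 𝕜) (hq : ∀ l, (q l).IsHomogeneous d)
    (hq_conj : ∀ l, map (starRingEnd 𝕜) (q l) = q l)
    (D : ι → MvPolynomial σ 𝕜 → MvPolynomial σ 𝕜)
    (hD : ∀ l A Q, fischerPairing (A * q l) Q = fischerPairing A (D l Q))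
    (hD_hom : ∀ l Q, Q.IsHomogeneous p → (D l Q).IsHomogeneous (p - d))
    {P : MvPolynomial σ 𝕜} (hP : P.IsHomogeneous p) :
    ∃ (A : ι → MvPolynomial σ 𝕜) (P₀ : MvPolynomial σ 𝕜),
      (∀ l, (A l).IsHomogeneous (p - d)) ∧ P₀.IsHomogeneous p ∧
      P = (∑ l, A l * q l) + P₀ ∧ ∀ l, D l P₀ = 0 := by
  classical
  let H := homogeneousSubmodule σ 𝕜 (p - d)
  have : Module.Finite 𝕜 H := Module.Finite.iff_fg.2 (homogeneousSubmodule_fg ..)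
  let W := LinearMap.range (∑ l, LinearMap.mulRight 𝕜 (q l) ∘ₗ H.subtype ∘ₗ LinearMap.proj l)
  have mul_mem_W : ∀ l A, A.IsHomogeneous (p - d) → A * q l ∈ W :=
    fun l A hA => ⟨Pi.single l ⟨A, hA⟩, by simp [Pi.single_apply, apply_ite]⟩
  have mem_W : ∀ x ∈ W, ∃ A : ι → MvPolynomial σ 𝕜, (∀ l, (A l).IsHomogeneous (p - d)) ∧
      x = ∑ l, A l * q l := by
    rintro _ ⟨A, rfl⟩
    exact ⟨fun l => A l, fun l => (A l).2, by simp⟩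
  have W_conj : ∀ x ∈ W, map (starRingEnd 𝕜) x ∈ W := by
    intro x hx
    obtain ⟨A, hA, rfl⟩ := mem_W x hx
    simp only [map_sum, map_mul, hq_conj]
    exact Submodule.sum_mem _ fun l _ => mul_mem_W l _ ((hA l).map _)
  obtain ⟨w, hw, hP₀⟩ := LinearMap.BilinForm.exists_sub_mem_orthogonal_of_restrict_nondegenerate
    (fischerPairing_restrict_nondegenerate W_conj) P
  obtain ⟨A, hA, rfl⟩ := mem_W w hw
  have hw_hom : (∑ l, A l * q l).IsHomogeneous p :=
    IsHomogeneous.sum _ _ _ fun l _ => Nat.sub_add_cancel hdp ▸ (hA l).mul (hq l)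
  refine ⟨A, P - ∑ l, A l * q l, hA, hP.sub hw_hom, (add_sub_cancel _ _).symm, fun l => ?_⟩
  have hQ := (hD_hom l _ (hP.sub hw_hom)).map (starRingEnd 𝕜)
  exact eq_zero_of_fischerPairing_map_conj_self (hD l _ _ ▸ hP₀ _ (mul_mem_W l _ hQ))

end MvPolynomial

section Quadrics

variable {N : ℕ} (lam : Fin N → ℝ) (l : Fin N)

theorem qPoly_isHomogeneous : (qPoly N lam l).IsHomogeneous 2 :=
  ((isHomogeneous_X _ _).mul (isHomogeneous_X _ _)).add
    (((isHomogeneous_X_pow _ _).add (isHomogeneous_X_pow _ _)).C_mul _)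

theorem map_conj_qPoly : map (starRingEnd ℂ) (qPoly N lam l) = qPoly N lam l := by
  simp [qPoly]

theorem fischerOp_isHomogeneous {p : ℕ} {P : MvPolynomial (Fin N ⊕ Fin N) ℂ}
    (hP : P.IsHomogeneous p) : (fischerOp N lam l P).IsHomogeneous (p - 2) := by
  have second : ∀ i j, (pderiv i (pderiv j P)).IsHomogeneous (p - 2) := fun i j =>
    Nat.sub_sub p 1 1 ▸ (hP.pderiv.pderiv)
  exact (second _ _).add (((second _ _).add (second _ _)).C_mul _)

theorem fischerPairing_mul_qPoly (A Q : MvPolynomial (Fin N ⊕ Fin N) ℂ) :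
    fischerPairing (A * qPoly N lam l) Q = fischerPairing A (fischerOp N lam l Q) := by
  -- `ζ_l` outermost in the first term, so that its adjoint is `∂_z ∂_ζ` exactly as in `fischerOp`
  have expand : A * qPoly N lam l = X (Sum.inr l) * (X (Sum.inl l) * A) + (lam l : ℂ) •
      (X (Sum.inl l) * (X (Sum.inl l) * A) + X (Sum.inr l) * (X (Sum.inr l) * A)) := by
    rw [qPoly, smul_eq_C_mul]
    ring
  simp only [expand, fischerOp, ← smul_eq_C_mul, map_add, map_smul, LinearMap.add_apply,
    LinearMap.smul_apply, fischerPairing_X_mul]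

end Quadrics

theorem simultaneous_fischer_decomposition_general (N : ℕ)
    (lam : Fin N → ℝ)
    (p : ℕ) (hp : 2 ≤ p)
    (P : MvPolynomial (Fin N ⊕ Fin N) ℂ) (hP : P.IsHomogeneous p) :
    ∃ (A : Fin N → MvPolynomial (Fin N ⊕ Fin N) ℂ) (P₀ : MvPolynomial (Fin N ⊕ Fin N) ℂ),
      (∀ l, (A l).IsHomogeneous (p - 2)) ∧ P₀.IsHomogeneous p ∧
      P = (∑ l : Fin N, A l * qPoly N lam l) + P₀ ∧
      ∀ l, fischerOp N lam l P₀ = 0 :=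
  exists_fischer_decomposition hp (qPoly N lam) (qPoly_isHomogeneous lam) (map_conj_qPoly lam)
    (fischerOp N lam) (fischerPairing_mul_qPoly lam)
    (fun l _ hQ => fischerOp_isHomogeneous lam l hQ) hP

/-- **simultaneous generalized Fischer decomposition.** Let `N ≥ 1` and
`0 < λ_l < 1/2` for all `l`. For every `p ≥ 2` and every homogeneous polynomial `P` of degree
`p` there exist homogeneous `A_1,…,A_N` of degree `p−2` and a homogeneous `P₀` of degree `p`
with `P = Σ_l A_l·q_l + P₀` and `T_l(P₀) = 0` for every `l`. -/
theorem simultaneous_fischer_decomposition (N : ℕ) (hN : 1 ≤ N)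
    (lam : Fin N → ℝ) (hlam : ∀ l, 0 < lam l ∧ lam l < 1 / 2)
    (p : ℕ) (hp : 2 ≤ p)
    (P : MvPolynomial (Fin N ⊕ Fin N) ℂ) (hP : P.IsHomogeneous p) :
    ∃ (A : Fin N → MvPolynomial (Fin N ⊕ Fin N) ℂ) (P₀ : MvPolynomial (Fin N ⊕ Fin N) ℂ),
      (∀ l, (A l).IsHomogeneous (p - 2)) ∧ P₀.IsHomogeneous p ∧
      P = (∑ l : Fin N, A l * qPoly N lam l) + P₀ ∧
      ∀ l, fischerOp N lam l P₀ = 0 :=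
  simultaneous_fischer_decomposition_general N lam p hp P hP
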